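/- arXiv:1808.09670 — 5 statements merged into one kernel-verified Lean document; each statement's English description precedes it below -/
import Mathlib

section
/- Let F : ℝ^n → ℝ be convex (hence continuous), let λ > 0, and let (x_t)_{t ∈ ℕ} be any sequence in ℝ^n satisfying x_{t+1} = x_t − λ p_t for some vectors p_t ∈ ℝ^n. Define the approximation errors ε_t = ‖p_t − (1/λ)(x_t − prox_{λF}(x_t))‖. If the sequence (x_t)_t is bounded and Σ_{t=0}^∞ ε_t < ∞, then lim_{t→∞} F(x_t) = inf_{x ∈ ℝ^n} F(x). -/
/-!
The proximal point `m` of a convex `g` at `x` satisfies `x - m ∈ ∂g(m)`; hence `g m ≤ g x` and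
`‖m - y‖² ≤ ‖x - y‖² - ‖x - m‖² + 2 (g y - g m)` for every `y`. The iterates stay within summable
distance `e t` of the proximal points and `g` is Lipschitz on bounded sets, so
`g (x (t + 1)) ≤ g (x t) + K e t` and the values `g (x t)` converge to some `l`. If `g y < l`, the
second inequality eventually decreases `‖x t - y‖²` by a fixed amount at every step, which is
impossible. The theorem is the case `g = λ F`, with errors `λ ε t`.
-/

open Bornology Filter Set Topology
open scoped RealInnerProductSpace

theorem exists_tendsto_of_bddBelow_of_le_add {u e : ℕ → ℝ} (hu : BddBelow (range u))
    (he : Summable e) (hstep : ∀ t, u (t + 1) ≤ u t + e t) :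
    ∃ l, Tendsto u atTop (𝓝 l) := by
  set τ : ℕ → ℝ := fun t => ∑' k, e (k + t)
  have hτ : Tendsto τ atTop (𝓝 0) := tendsto_sum_nat_add e
  have hτ_succ : ∀ t, τ t = e t + τ (t + 1) := fun t => by
    simpa [τ, add_assoc, add_comm 1] using ((summable_nat_add_iff t).2 he).tsum_eq_zero_add
  have hanti : Antitone (u + τ) := antitone_nat_of_succ_le fun t => by
    simp only [Pi.add_apply]
    linarith [hstep t, hτ_succ t]
  have hbdd : BddBelow (range (u + τ)) := by
    obtain ⟨a, ha⟩ := hu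
    obtain ⟨b, hb⟩ := hτ.bddBelow_range
    exact ⟨a + b, by
      rintro _ ⟨t, rfl⟩
      exact add_le_add (ha (mem_range_self t)) (hb (mem_range_self t))⟩
  exact ⟨_, by simpa using (tendsto_atTop_ciInf hanti hbdd).sub hτ⟩

theorem tendsto_atBot_of_eventually_le_sub {u : ℕ → ℝ} {c : ℝ} (hc : 0 < c)
    (h : ∀ᶠ t in atTop, u (t + 1) ≤ u t - c) : Tendsto u atTop atBot := by
  obtain ⟨t₀, ht₀⟩ := eventually_atTop.1 h
  have hle : ∀ N : ℕ, u (N + t₀) ≤ u t₀ + -(N * c) := by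
    intro N
    induction N with
    | zero => simp
    | succ N ih =>
      have := ht₀ (N + t₀) (Nat.le_add_left _ _)
      rw [add_right_comm]
      push_cast
      linarith
  refine (tendsto_add_atTop_iff_nat t₀).1 (tendsto_atBot_mono hle ?_)
  exact tendsto_atBot_add_const_left _ _
    (tendsto_neg_atTop_atBot.comp (tendsto_natCast_atTop_atTop.atTop_mul_const hc))

theorem LocallyLipschitz.exists_lipschitzOnWith_of_isBounded {α β : Type*}
    [PseudoMetricSpace α] [ProperSpace α] [PseudoMetricSpace β] {f : α → β}
    (hf : LocallyLipschitz f) {s : Set α} (hs : IsBounded s) :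
    ∃ K, LipschitzOnWith K f s := by
  obtain ⟨K, hK⟩ := hf.locallyLipschitzOn.exists_lipschitzOnWith_of_compact hs.isCompact_closure
  exact ⟨K, hK.mono subset_closure⟩

theorem isBounded_range_of_norm_sub_le {E : Type*} [SeminormedAddCommGroup E]
    {x m : ℕ → E} {e : ℕ → ℝ} (hx : IsBounded (range x))
    (he : BddAbove (range e)) (hstep : ∀ t, ‖x (t + 1) - m t‖ ≤ e t) :
    IsBounded (range m) := by
  obtain ⟨R, hR⟩ := isBounded_iff_forall_norm_le.1 hx
  obtain ⟨C, hC⟩ := he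
  refine isBounded_iff_forall_norm_le.2 ⟨R + C, ?_⟩
  rintro _ ⟨t, rfl⟩
  calc ‖m t‖ ≤ ‖x (t + 1)‖ + ‖x (t + 1) - m t‖ := norm_le_norm_add_norm_sub _ _
    _ ≤ R + C := add_le_add (hR _ (mem_range_self _)) ((hstep t).trans (hC (mem_range_self t)))

variable {E : Type*} [NormedAddCommGroup E]

def IsProxPoint (g : E → ℝ) (x m : E) : Prop :=
  IsMinOn (fun u => g u + 1 / 2 * ‖u - x‖ ^ 2) univ m

namespace IsProxPoint

variable {g : E → ℝ} {x m : E}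

theorem le_self (h : IsProxPoint g x m) : g m ≤ g x := by
  have := isMinOn_iff.1 h x (mem_univ x)
  simp only [sub_self, norm_zero] at this
  nlinarith [sq_nonneg ‖m - x‖]

variable [InnerProductSpace ℝ E]

/-- `x - m` is a subgradient of `g` at `m`. -/
theorem inner_sub_le (hg : ConvexOn ℝ univ g) (h : IsProxPoint g x m) (u : E) :
    ⟪x - m, u - m⟫ ≤ g u - g m := by
  have key : ∀ t ∈ Ioc (0 : ℝ) 1, ⟪x - m, u - m⟫ ≤ g u - g m + t / 2 * ‖u - m‖ ^ 2 := by
    rintro t ⟨ht0, ht1⟩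
    have hconv : g (m + t • (u - m)) ≤ (1 - t) * g m + t * g u := by
      have := hg.2 (mem_univ m) (mem_univ u) (sub_nonneg.2 ht1) ht0.le (sub_add_cancel 1 t)
      rwa [show (1 - t) • m + t • u = m + t • (u - m) by module, smul_eq_mul, smul_eq_mul] at this
    have hmin := isMinOn_iff.1 h (m + t • (u - m)) (mem_univ _)
    have hnorm : ‖m + t • (u - m) - x‖ ^ 2
        = ‖x - m‖ ^ 2 - 2 * t * ⟪x - m, u - m⟫ + t ^ 2 * ‖u - m‖ ^ 2 := by
      rw [show m + t • (u - m) - x = -(x - m) + t • (u - m) by abel, norm_add_sq_real,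
        inner_neg_left, inner_smul_right, norm_neg, norm_smul, Real.norm_of_nonneg ht0.le]
      ring
    rw [norm_sub_rev m x, hnorm] at hmin
    have : t * ⟪x - m, u - m⟫ ≤ t * (g u - g m + t / 2 * ‖u - m‖ ^ 2) := by nlinarith
    exact le_of_mul_le_mul_left this ht0
  have hlim : Tendsto (fun t : ℝ => g u - g m + t / 2 * ‖u - m‖ ^ 2) (𝓝[>] 0)
      (𝓝 (g u - g m)) := by
    refine tendsto_nhdsWithin_of_tendsto_nhds ?_
    simpa using (((continuous_id.div_const 2).mul_const (‖u - m‖ ^ 2)).const_add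
      (g u - g m)).tendsto 0
  exact ge_of_tendsto hlim (by filter_upwards [Ioc_mem_nhdsGT one_pos] with t ht using key t ht)

theorem norm_sub_sq_le (hg : ConvexOn ℝ univ g) (h : IsProxPoint g x m) (y : E) :
    ‖m - y‖ ^ 2 ≤ ‖x - y‖ ^ 2 - ‖x - m‖ ^ 2 + 2 * (g y - g m) := by
  have hsub := h.inner_sub_le hg y
  have hexp : ‖x - y‖ ^ 2 = ‖x - m‖ ^ 2 - 2 * ⟪x - m, y - m⟫ + ‖y - m‖ ^ 2 := by
    rw [show x - y = (x - m) - (y - m) by abel, norm_sub_sq_real]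
  rw [norm_sub_rev y m] at hexp
  linarith

theorem norm_sub_sq_le_sub_add (hg : ConvexOn ℝ univ g) (h : IsProxPoint g x m) {x' y : E}
    {c e D : ℝ} (hc : g y + c ≤ g m) (he : ‖x' - m‖ ≤ e) (hD : ‖x' - y‖ + ‖m - y‖ ≤ D) :
    ‖x' - y‖ ^ 2 ≤ ‖x - y‖ ^ 2 - 2 * c + D * e := by
  have hm := h.norm_sub_sq_le hg y
  have htri : ‖x' - y‖ ≤ ‖x' - m‖ + ‖m - y‖ := norm_sub_le_norm_sub_add_norm_sub _ _ _
  nlinarith [norm_nonneg (x' - m), norm_nonneg (x' - y), norm_nonneg (m - y),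
    sq_nonneg ‖x - m‖]

end IsProxPoint

section InexactProximalPoint

variable [InnerProductSpace ℝ E] {g : E → ℝ} {x m : ℕ → E} {e : ℕ → ℝ}

theorem exists_tendsto_comp_of_isProxPoint [FiniteDimensional ℝ E] (hg : ConvexOn ℝ univ g)
    (hm : ∀ t, IsProxPoint g (x t) (m t)) (hstep : ∀ t, ‖x (t + 1) - m t‖ ≤ e t)
    (he : Summable e) (hx : IsBounded (range x)) :
    ∃ l, Tendsto (g ∘ x) atTop (𝓝 l) ∧ Tendsto (g ∘ m) atTop (𝓝 l) := by
  have hmb := isBounded_range_of_norm_sub_le hx he.tendsto_atTop_zero.bddAbove_range hstep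
  obtain ⟨K, hK⟩ := hg.locallyLipschitz.exists_lipschitzOnWith_of_isBounded (hx.union hmb)
  have hclose : ∀ t, ‖g (x (t + 1)) - g (m t)‖ ≤ K * e t := fun t => by
    have := hK.dist_le_mul _ (.inl (mem_range_self (t + 1))) _ (.inr (mem_range_self t))
    rw [dist_eq_norm, dist_eq_norm] at this
    exact this.trans (by gcongr; exact hstep t)
  have hbdd : BddBelow (range (g ∘ x)) := by
    rw [range_comp]
    exact (hx.isCompact_closure.bddBelow_image hg.locallyLipschitz.continuous.continuousOn).mono
      (image_mono subset_closure)
  obtain ⟨l, hl⟩ := exists_tendsto_of_bddBelow_of_le_add hbdd (he.mul_left (K : ℝ)) fun t => by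
    have := (hm t).le_self
    have := (abs_le.1 (hclose t)).2
    simp only [Function.comp]
    linarith
  refine ⟨l, hl, ?_⟩
  have hdiff : Tendsto (fun t => g (x (t + 1)) - g (m t)) atTop (𝓝 0) :=
    squeeze_zero_norm hclose (by simpa using he.tendsto_atTop_zero.const_mul (K : ℝ))
  simpa [Function.comp_def] using ((tendsto_add_atTop_iff_nat 1).2 hl).sub hdiff

theorem le_of_tendsto_comp_of_isProxPoint (hg : ConvexOn ℝ univ g)
    (hm : ∀ t, IsProxPoint g (x t) (m t)) (hstep : ∀ t, ‖x (t + 1) - m t‖ ≤ e t)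
    (he : Tendsto e atTop (𝓝 0)) (hx : IsBounded (range x)) {l : ℝ}
    (hl : Tendsto (g ∘ m) atTop (𝓝 l)) (y : E) : l ≤ g y := by
  by_contra! hlt
  set c := (l - g y) / 2 with hcdef
  have hc : 0 < c := by linarith
  obtain ⟨R, hR⟩ := isBounded_iff_forall_norm_le.1
    (hx.union (isBounded_range_of_norm_sub_le hx he.bddAbove_range hstep))
  set D := 2 * (R + ‖y‖)
  have hfar : ∀ᶠ t in atTop, g y + c < g (m t) := hl.eventually_const_lt (by linarith [hcdef])
  have hsmall : ∀ᶠ t in atTop, D * e t < c :=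
    (by simpa using he.const_mul D : Tendsto (fun t => D * e t) atTop (𝓝 0)).eventually_lt_const hc
  have hdecr : ∀ᶠ t in atTop, ‖x (t + 1) - y‖ ^ 2 ≤ ‖x t - y‖ ^ 2 - c := by
    filter_upwards [hfar, hsmall] with t hft hst
    have hD : ‖x (t + 1) - y‖ + ‖m t - y‖ ≤ D := by
      have := hR _ (.inl (mem_range_self (t + 1)))
      have := hR _ (.inr (mem_range_self t))
      linarith [norm_sub_le (x (t + 1)) y, norm_sub_le (m t) y]
    linarith [(hm t).norm_sub_sq_le_sub_add hg hft.le (hstep t) hD]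
  obtain ⟨t, ht⟩ := ((tendsto_atBot_of_eventually_le_sub (u := fun t => ‖x t - y‖ ^ 2) hc
    hdecr).eventually_lt_atBot 0).exists
  exact (sq_nonneg _).not_gt ht

theorem tendsto_comp_ciInf_of_isProxPoint [FiniteDimensional ℝ E] (hg : ConvexOn ℝ univ g)
    (hm : ∀ t, IsProxPoint g (x t) (m t)) (hstep : ∀ t, ‖x (t + 1) - m t‖ ≤ e t)
    (he : Summable e) (hx : IsBounded (range x)) :
    Tendsto (g ∘ x) atTop (𝓝 (⨅ y, g y)) := by
  obtain ⟨l, hxl, hml⟩ := exists_tendsto_comp_of_isProxPoint hg hm hstep he hx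
  have hglb : IsGLB (range g) l := by
    refine ⟨?_, fun b hb => ge_of_tendsto' hxl fun t => hb (mem_range_self (x t))⟩
    rintro _ ⟨y, rfl⟩
    exact le_of_tendsto_comp_of_isProxPoint hg hm hstep he.tendsto_atTop_zero hx hml y
  rwa [hglb.ciInf_eq]

end InexactProximalPoint

/-- Convergence of the approximate proximal point method with summable errors
(Rockafellar): if the iterates are bounded and the approximation errors are
summable, the objective values converge to the infimum. -/
theorem approx_prox_point_convergence {n : ℕ}
    (F : EuclideanSpace ℝ (Fin n) → ℝ)
    (hconv : ConvexOn ℝ Set.univ F)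
    (lam : ℝ) (hlam : 0 < lam)
    (prox : EuclideanSpace ℝ (Fin n) → EuclideanSpace ℝ (Fin n))
    (hprox : ∀ y, IsMinOn (fun u => lam * F u + 1 / 2 * ‖u - y‖ ^ 2) Set.univ (prox y))
    (x p : ℕ → EuclideanSpace ℝ (Fin n))
    (hx : ∀ t, x (t + 1) = x t - lam • p t)
    (hbdd : Bornology.IsBounded (Set.range x))
    (herr : Summable fun t => ‖p t - (1 / lam) • (x t - prox (x t))‖) :
    Tendsto (fun t => F (x t)) atTop (nhds (⨅ y, F y)) := by
  have hstep : ∀ t, ‖x (t + 1) - prox (x t)‖ = lam * ‖p t - (1 / lam) • (x t - prox (x t))‖ := by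
    intro t
    have hres : x (t + 1) - prox (x t) = -(lam • (p t - (1 / lam) • (x t - prox (x t)))) := by
      rw [hx t, smul_sub, smul_smul, mul_one_div_cancel hlam.ne', one_smul]
      abel
    rw [hres, norm_neg, norm_smul, Real.norm_of_nonneg hlam.le]
  have hscaled := tendsto_comp_ciInf_of_isProxPoint (g := fun u => lam * F u)
    (m := fun t => prox (x t))
    (hconv.smul hlam.le) (fun t => hprox (x t)) (fun t => (hstep t).le) (herr.mul_left lam) hbdd
  rw [← Real.mul_iInf_of_nonneg hlam.le] at hscaled
  simpa [Function.comp_def, inv_mul_cancel_left₀ hlam.ne'] using hscaled.const_mul lam⁻¹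
end

section
/- Let (α_t)_{t ∈ ℕ} be real numbers and let, for each iteration t' and each index t ≤ t', w_t^{(t')} denote the coefficient of g_t in the expansion f_{t'} = Σ_{t=0}^{t'} w_t^{(t')} g_t of the sequence defined by f_{t'+1} = (1 + α_{t'}) f_{t'} − α_{t'} f_{t'−1} + ν γ_{t'+1} g_{t'+1}, i.e. the coefficients satisfy w_t^{(t'+1)} = (1 + α_{t'}) w_t^{(t')} − α_{t'} w_t^{(t'−1)} for t < t', w_{t'}^{(t'+1)} = (1 + α_{t'}) w_{t'}^{(t')}, and w_{t'+1}^{(t'+1)} = ν γ_{t'+1}, with the convention w_t^{(t−1)} = 0. Then for all indices t ≤ t': w_t^{(t'+1)} − w_t^{(t')} = (∏_{k=t}^{t'} α_k) · w_t^{(t)}, and consequently w_t^{(t'+1)} = (1 + Σ_{j=t}^{t'} ∏_{k=t}^{j} α_k) · w_t^{(t)}. -/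
/-!
The recursion says that the first differences `d j = w t (j + 1) - w t j` satisfy
`d (j + 1) = α (j + 1) * d j`, starting from `d t = α t * w t t`; hence each `d j` is a
partial product of the `α k` times `w t t`, and summing the telescoping differences gives
the closed form.
-/

open Finset

theorem eq_prod_Icc_mul_of_succ_eq_mul {M : Type*} [CommMonoid M] {a d : ℕ → M} {m : ℕ} {c : M}
    (hbase : d m = a m * c) (hsucc : ∀ n, m ≤ n → d (n + 1) = a (n + 1) * d n) :
    ∀ n, m ≤ n → d n = (∏ k ∈ Icc m n, a k) * c := by
  intro n hmn
  induction n, hmn using Nat.le_induction with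
  | base => simpa using hbase
  | succ n hmn ih =>
    rw [hsucc n hmn, ih, prod_Icc_succ_top (by omega), mul_comm _ (a (n + 1)), mul_assoc]

theorem accelerated_boosting_weight_recursion_closed_form_general
    (α : ℕ → ℝ)
    (w : ℕ → ℕ → ℝ)
    (hrec : ∀ t t', t < t' → w t (t' + 1) = (1 + α t') * w t t' - α t' * w t (t' - 1))
    (hstep : ∀ t', w t' (t' + 1) = (1 + α t') * w t' t') :
    ∀ t t', t ≤ t' →
      w t (t' + 1) - w t t' = (∏ k ∈ Finset.Icc t t', α k) * w t t ∧
      w t (t' + 1) = (1 + ∑ j ∈ Finset.Icc t t', ∏ k ∈ Finset.Icc t j, α k) * w t t := by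
  intro t t' htt'
  have hdiff : ∀ n, t ≤ n → w t (n + 1) - w t n = (∏ k ∈ Icc t n, α k) * w t t := by
    refine eq_prod_Icc_mul_of_succ_eq_mul (by rw [hstep]; ring) fun n htn => ?_
    rw [hrec t (n + 1) (by omega), Nat.add_sub_cancel]
    ring
  refine ⟨hdiff t' htt', ?_⟩
  calc w t (t' + 1) = w t t + ∑ j ∈ Icc t t', (w t (j + 1) - w t j) := by
        rw [sum_Icc_sub htt']; ring
    _ = (1 + ∑ j ∈ Icc t t', ∏ k ∈ Icc t j, α k) * w t t := by
        rw [sum_congr rfl fun j hj => hdiff j (mem_Icc.1 hj).1, ← sum_mul]; ring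

/-- Closed-form solution of the recursion on the coefficients induced by the
accelerated boosting update. Here `w t t'` denotes the coefficient `w_t^{(t')}`
of `g t` in the expansion of `f t'`. -/
theorem accelerated_boosting_weight_recursion_closed_form
    (α : ℕ → ℝ) (ν : ℝ) (γ : ℕ → ℝ)
    (w : ℕ → ℕ → ℝ)
    (hconv : ∀ t, 1 ≤ t → w t (t - 1) = 0)
    (hrec : ∀ t t', t < t' → w t (t' + 1) = (1 + α t') * w t t' - α t' * w t (t' - 1))
    (hstep : ∀ t', w t' (t' + 1) = (1 + α t') * w t' t')
    (hnew : ∀ t', w (t' + 1) (t' + 1) = ν * γ (t' + 1)) :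
    ∀ t t', t ≤ t' →
      w t (t' + 1) - w t t' = (∏ k ∈ Finset.Icc t t', α k) * w t t ∧
      w t (t' + 1) = (1 + ∑ j ∈ Finset.Icc t t', ∏ k ∈ Finset.Icc t j, α k) * w t t :=
  accelerated_boosting_weight_recursion_closed_form_general α w hrec hstep
end

section
/- Let F : ℝ^n → ℝ be convex, differentiable and L-strongly smooth for some L > 0. Fix ζ ∈ (0,1] and set λ = ζ²/(8L). Let x ∈ ℝ^n, put g = (1/λ)(x − prox_{λF}(x)), and let p ∈ ℝ^n satisfy ‖g − p‖² ≤ (1 − ζ²)‖g‖². Then F(x − λ p) ≤ F(x) − (ζ⁴/(16L)) ‖g‖². -/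
open scoped RealInnerProductSpace

/-!
The optimality condition of the proximal step says that `g = ∇F (prox x)`. A convex
`L`-smooth function has an `L`-Lipschitz gradient (via co-coercivity), so
`‖∇F x - g‖ ≤ L λ ‖g‖ = ζ² ‖g‖ / 8`. The smoothness bound at `x` then gives
`F (x - λ p) - F x ≤ -λ ⟪g, p⟫ + λ ζ² ‖g‖ ‖p‖ / 8 + λ ζ² ‖p‖² / 16`, and the edge condition yields
both `2 ⟪g, p⟫ ≥ ζ² ‖g‖² + ‖p‖²` and `‖p‖ ≥ ζ² ‖g‖ / 2`, which bound the right side by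
`-λ ζ² ‖g‖² / 2 = -ζ⁴ ‖g‖² / (16 L)`.
-/

def IsStronglySmooth {E : Type*} [NormedAddCommGroup E] [InnerProductSpace ℝ E]
    (f : E → ℝ) (f' : E → E) (L : ℝ) : Prop :=
  ∀ y y', f y' ≤ f y + ⟪f' y, y' - y⟫ + L / 2 * ‖y' - y‖ ^ 2

section

variable {E : Type*} [NormedAddCommGroup E] [InnerProductSpace ℝ E] [CompleteSpace E]
  {f : E → ℝ} {f' : E → E} {L : ℝ}

theorem ConvexOn.add_inner_le_of_hasGradientAt (hf : ConvexOn ℝ Set.univ f) {a g : E}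
    (hg : HasGradientAt f g a) (b : E) : f a + ⟪g, b - a⟫ ≤ f b := by
  have hline : ConvexOn ℝ Set.univ (f ∘ AffineMap.lineMap (k := ℝ) a b) := hf.comp_affineMap _
  have hderiv : HasDerivAt (f ∘ AffineMap.lineMap (k := ℝ) a b) ⟪g, b - a⟫ 0 := by
    have hF := hg.hasFDerivAt
    rw [← AffineMap.lineMap_apply_zero a b (k := ℝ)] at hF
    simpa using hF.comp_hasDerivAt 0 AffineMap.hasDerivAt_lineMap
  have hslope := hline.le_slope_of_hasDerivAt (Set.mem_univ 0) (Set.mem_univ 1) one_pos hderiv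
  simp only [slope_def_field, Function.comp_apply, AffineMap.lineMap_apply_one,
    AffineMap.lineMap_apply_zero, sub_zero, div_one] at hslope
  linarith

theorem IsStronglySmooth.add_inner_add_sq_norm_sub_le (hs : IsStronglySmooth f f' L) (hL : 0 < L)
    (hf : ConvexOn ℝ Set.univ f) (hd : ∀ y, HasGradientAt f (f' y) y) (a b : E) :
    f a + ⟪f' a, b - a⟫ + 1 / (2 * L) * ‖f' b - f' a‖ ^ 2 ≤ f b := by
  set d := f' b - f' a
  -- compare the first-order lower bound at `a` with the smoothness upper bound at `b`,
  -- both taken at the point `b - L⁻¹ • d`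
  have hconv := hf.add_inner_le_of_hasGradientAt (hd a) (b - L⁻¹ • d)
  have hsmooth := hs b (b - L⁻¹ • d)
  rw [sub_sub_cancel_left, inner_neg_right, real_inner_smul_right, norm_neg, norm_smul,
    Real.norm_of_nonneg (inv_nonneg.2 hL.le)] at hsmooth
  rw [sub_right_comm, inner_sub_right, real_inner_smul_right] at hconv
  have hd2 : L⁻¹ * ⟪f' b, d⟫ - L⁻¹ * ⟪f' a, d⟫ = L⁻¹ * ‖d‖ ^ 2 := by
    rw [← mul_sub, ← inner_sub_left, real_inner_self_eq_norm_sq]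
  have h1 : L / 2 * (L⁻¹ * ‖d‖) ^ 2 = L⁻¹ * ‖d‖ ^ 2 / 2 := by field_simp
  have h2 : 1 / (2 * L) * ‖d‖ ^ 2 = L⁻¹ * ‖d‖ ^ 2 / 2 := by field_simp
  linarith

theorem IsStronglySmooth.norm_sub_le (hs : IsStronglySmooth f f' L) (hL : 0 < L)
    (hf : ConvexOn ℝ Set.univ f) (hd : ∀ y, HasGradientAt f (f' y) y) (a b : E) :
    ‖f' b - f' a‖ ≤ L * ‖b - a‖ := by
  set d := f' b - f' a
  have hab := hs.add_inner_add_sq_norm_sub_le hL hf hd a b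
  have hba := hs.add_inner_add_sq_norm_sub_le hL hf hd b a
  rw [norm_sub_rev (f' a), ← neg_sub b a, inner_neg_right] at hba
  have hcoco : ‖d‖ ^ 2 ≤ L * ⟪d, b - a⟫ := by
    have hscale : 2 * L * (1 / (2 * L) * ‖d‖ ^ 2) = ‖d‖ ^ 2 := by field_simp
    rw [inner_sub_left]
    nlinarith
  have hcs := real_inner_le_norm d (b - a)
  rcases (norm_nonneg d).eq_or_lt with hd0 | hdpos
  · rw [← hd0]; positivity
  · nlinarith

theorem IsMinOn.smul_gradient_eq_sub {lam : ℝ} {y u g : E}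
    (hmin : IsMinOn (fun v => lam * f v + 1 / 2 * ‖v - y‖ ^ 2) Set.univ u)
    (hg : HasGradientAt f g u) : lam • g = y - u := by
  have hderiv : HasFDerivAt (fun v => lam * f v + 1 / 2 * ‖v - y‖ ^ 2)
      (InnerProductSpace.toDual ℝ E (lam • g + (u - y))) u := by
    refine ((hg.hasFDerivAt.const_mul lam).add
      (((hasFDerivAt_id u).sub_const y).norm_sq.const_mul (1 / 2))).congr_fderiv ?_
    ext v
    simp
  have hcrit := (hmin.isLocalMin Filter.univ_mem).hasFDerivAt_eq_zero hderiv
  rwa [LinearIsometryEquiv.map_eq_zero_iff, add_eq_zero_iff_eq_neg, neg_sub] at hcrit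

omit [CompleteSpace E] in
theorem le_inner_of_norm_sub_sq_le {ζ : ℝ} (hζ : ζ ^ 2 ≤ 1) {g p : E}
    (hedge : ‖g - p‖ ^ 2 ≤ (1 - ζ ^ 2) * ‖g‖ ^ 2) :
    ζ ^ 2 / 2 * ‖g‖ ^ 2 + ζ ^ 2 / 8 * (‖g‖ * ‖p‖) + ζ ^ 2 / 16 * ‖p‖ ^ 2 ≤ ⟪g, p⟫ := by
  have hinner : ζ ^ 2 * ‖g‖ ^ 2 + ‖p‖ ^ 2 ≤ 2 * ⟪g, p⟫ := by
    rw [norm_sub_sq_real] at hedge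
    linarith
  have hnorm : ζ ^ 2 / 2 * ‖g‖ ≤ ‖p‖ := by
    have hdist : ‖g - p‖ ≤ (1 - ζ ^ 2 / 2) * ‖g‖ := by
      rw [← pow_le_pow_iff_left₀ (norm_nonneg _) (by nlinarith [norm_nonneg g]) two_ne_zero]
      nlinarith [sq_nonneg (ζ ^ 2 / 2 * ‖g‖)]
    linarith [norm_sub_norm_le g p]
  nlinarith [mul_nonneg (norm_nonneg p) (sq_nonneg ζ), norm_nonneg g, norm_nonneg p]

end

/-- One-step descent property of the approximated proximal point method for an
`L`-strongly smooth convex function, under the edge condition. -/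
theorem approx_prox_step_descent {n : ℕ}
    (F : EuclideanSpace ℝ (Fin n) → ℝ)
    (F' : EuclideanSpace ℝ (Fin n) → EuclideanSpace ℝ (Fin n))
    (L : ℝ) (hL : 0 < L)
    (hconv : ConvexOn ℝ Set.univ F)
    (hdiff : ∀ y, HasGradientAt F (F' y) y)
    (hsmooth : ∀ y y', F y' ≤ F y + ⟪F' y, y' - y⟫ + L / 2 * ‖y' - y‖ ^ 2)
    (ζ : ℝ) (hζ : ζ ∈ Set.Ioc (0 : ℝ) 1)
    (lam : ℝ) (hlam : lam = ζ ^ 2 / (8 * L))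
    (prox : EuclideanSpace ℝ (Fin n) → EuclideanSpace ℝ (Fin n))
    (hprox : ∀ y, IsMinOn (fun u => lam * F u + 1 / 2 * ‖u - y‖ ^ 2) Set.univ (prox y))
    (x g p : EuclideanSpace ℝ (Fin n))
    (hg : g = (1 / lam) • (x - prox x))
    (hedge : ‖g - p‖ ^ 2 ≤ (1 - ζ ^ 2) * ‖g‖ ^ 2) :
    F (x - lam • p) ≤ F x - ζ ^ 4 / (16 * L) * ‖g‖ ^ 2 := by
  obtain ⟨hζ0, hζ1⟩ := hζ
  have hlam0 : 0 < lam := by rw [hlam]; positivity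
  have hLlam : L * lam = ζ ^ 2 / 8 := by rw [hlam]; field_simp
  have hstep : x - prox x = lam • g := by
    rw [hg, smul_smul, mul_one_div_cancel hlam0.ne', one_smul]
  have hgrad_prox : F' (prox x) = g :=
    smul_right_injective _ hlam0.ne' (((hprox x).smul_gradient_eq_sub (hdiff _)).trans hstep)
  have hgrad_x : ‖F' x - g‖ ≤ ζ ^ 2 / 8 * ‖g‖ := by
    have hlip := IsStronglySmooth.norm_sub_le hsmooth hL hconv hdiff (prox x) x
    rwa [hgrad_prox, hstep, norm_smul, Real.norm_of_nonneg hlam0.le, ← mul_assoc, hLlam] at hlip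
  have hinner : ⟪g, p⟫ - ζ ^ 2 / 8 * (‖g‖ * ‖p‖) ≤ ⟪F' x, p⟫ := by
    have hcs := real_inner_le_norm (g - F' x) p
    rw [inner_sub_left, norm_sub_rev] at hcs
    linarith [mul_le_mul_of_nonneg_right hgrad_x (norm_nonneg p)]
  have hdescent := hsmooth x (x - lam • p)
  rw [sub_sub_cancel_left, inner_neg_right, real_inner_smul_right, norm_neg, norm_smul,
    Real.norm_of_nonneg hlam0.le] at hdescent
  have hedge' := le_inner_of_norm_sub_sq_le (pow_le_one₀ hζ0.le hζ1) hedge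
  calc F (x - lam • p) ≤ F x - lam * (⟪F' x, p⟫ - ζ ^ 2 / 16 * ‖p‖ ^ 2) := by
        linear_combination hdescent + lam * ‖p‖ ^ 2 / 2 * hLlam
    _ ≤ F x - lam * (ζ ^ 2 / 2 * ‖g‖ ^ 2) := by gcongr; linarith
    _ = F x - ζ ^ 4 / (16 * L) * ‖g‖ ^ 2 := by rw [hlam]; field_simp; ring
end

section
/- Let F : ℝ^n → ℝ be convex and differentiable with L-Lipschitz continuous gradient (L > 0), let λ > 0 and ζ ∈ (0,1]. For x ∈ ℝ^n set g = (1/λ)(x − prox_{λF}(x)), and let p ∈ ℝ^n satisfy ‖g − p‖² ≤ (1 − ζ²)‖g‖². Then −λ ⟨∇F(x) − g, p⟩ ≤ 2 λ² L ‖g‖². -/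
open scoped RealInnerProductSpace

set_option maxHeartbeats 1000000

/-- Cross-term bound in the analysis of the approximated proximal point method. -/
theorem cross_term_bound {n : ℕ}
    (F : EuclideanSpace ℝ (Fin n) → ℝ)
    (F' : EuclideanSpace ℝ (Fin n) → EuclideanSpace ℝ (Fin n))
    (L : ℝ) (hL : 0 < L)
    (hconv : ConvexOn ℝ Set.univ F)
    (hdiff : ∀ y, HasGradientAt F (F' y) y)
    (hlip : ∀ y y', ‖F' y - F' y'‖ ≤ L * ‖y - y'‖)
    (lam : ℝ) (hlam : 0 < lam) (ζ : ℝ) (hζ : ζ ∈ Set.Ioc (0 : ℝ) 1)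
    (prox : EuclideanSpace ℝ (Fin n) → EuclideanSpace ℝ (Fin n))
    (hprox : ∀ y, IsMinOn (fun u => lam * F u + 1 / 2 * ‖u - y‖ ^ 2) Set.univ (prox y))
    (x g p : EuclideanSpace ℝ (Fin n))
    (hg : g = (1 / lam) • (x - prox x))
    (hedge : ‖g - p‖ ^ 2 ≤ (1 - ζ ^ 2) * ‖g‖ ^ 2) :
    -lam * ⟪F' x - g, p⟫ ≤ 2 * lam ^ 2 * L * ‖g‖ ^ 2 := by
  set u0 := prox x with hu0
  -- derivative of the prox objective at u0
  have hF : HasFDerivAt F (InnerProductSpace.toDual ℝ _ (F' u0)) u0 :=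
    (hdiff u0).hasFDerivAt
  have hsub : HasFDerivAt (fun u : EuclideanSpace ℝ (Fin n) => u - x)
      (ContinuousLinearMap.id ℝ _) u0 := (hasFDerivAt_id u0).sub_const x
  have hnorm : HasFDerivAt (fun u : EuclideanSpace ℝ (Fin n) => ⟪u - x, u - x⟫)
      ((fderivInnerCLM ℝ (u0 - x, u0 - x)).comp
        ((ContinuousLinearMap.id ℝ _).prod (ContinuousLinearMap.id ℝ _))) u0 :=
    hsub.inner ℝ hsub
  have hphi : HasFDerivAt (fun u => lam * F u + 1 / 2 * ‖u - x‖ ^ 2)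
      (lam • InnerProductSpace.toDual ℝ _ (F' u0) +
        (1/2 : ℝ) • ((fderivInnerCLM ℝ (u0 - x, u0 - x)).comp
          ((ContinuousLinearMap.id ℝ _).prod (ContinuousLinearMap.id ℝ _)))) u0 := by
    have heq : (fun u : EuclideanSpace ℝ (Fin n) => lam * F u + 1 / 2 * ‖u - x‖ ^ 2)
        = fun u => lam * F u + 1 / 2 * ⟪u - x, u - x⟫ := by
      funext u; rw [real_inner_self_eq_norm_sq]
    rw [heq]
    exact (hF.const_mul lam).add (hnorm.const_mul (1/2 : ℝ))
  have hmin : IsLocalMin (fun u => lam * F u + 1 / 2 * ‖u - x‖ ^ 2) u0 := by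
    have := hprox x
    rw [isMinOn_univ_iff] at this
    exact Filter.Eventually.of_forall this
  have hzero := hmin.hasFDerivAt_eq_zero hphi
  have key : ∀ v : EuclideanSpace ℝ (Fin n), lam * ⟪F' u0, v⟫ + ⟪u0 - x, v⟫ = 0 := by
    intro v
    have h := congrArg (fun (T : EuclideanSpace ℝ (Fin n) →L[ℝ] ℝ) => T v) hzero
    simp only [ContinuousLinearMap.add_apply, ContinuousLinearMap.smul_apply,
      ContinuousLinearMap.zero_apply, ContinuousLinearMap.comp_apply,
      ContinuousLinearMap.prod_apply, ContinuousLinearMap.coe_id', id_eq,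
      InnerProductSpace.toDual_apply_apply, fderivInnerCLM_apply, smul_eq_mul] at h
    linarith [real_inner_comm (u0 - x) v, h]
  -- F' u0 = g
  have hFg : F' u0 = g := by
    have hv : ∀ v : EuclideanSpace ℝ (Fin n), ⟪F' u0 - g, v⟫ = 0 := by
      intro v
      have h1 := key v
      have h2 : ⟪g, v⟫ = (1/lam) * ⟪x - u0, v⟫ := by
        rw [hg, real_inner_smul_left]
      have h3 : ⟪u0 - x, v⟫ = -⟪x - u0, v⟫ := by
        rw [← inner_neg_left]; congr 1; abel
      rw [inner_sub_left, h2]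
      rw [h3] at h1
      field_simp at h1 ⊢
      linarith
    have := hv (F' u0 - g)
    rwa [inner_self_eq_zero, sub_eq_zero] at this
  -- Lipschitz bound
  have hxu : ‖x - u0‖ = lam * ‖g‖ := by
    rw [hg, norm_smul, Real.norm_eq_abs, abs_of_pos (one_div_pos.mpr hlam)]
    field_simp
  have hlipb : ‖F' x - g‖ ≤ lam * L * ‖g‖ := by
    have := hlip x u0
    rw [hFg] at this
    rw [hxu] at this
    nlinarith
  -- bound ‖p‖
  have hpg : ‖g - p‖ ≤ ‖g‖ := by
    have h1 : ‖g - p‖ ^ 2 ≤ ‖g‖ ^ 2 := by nlinarith [hζ.1, sq_nonneg (‖g‖), sq_nonneg ζ]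
    nlinarith [norm_nonneg (g - p), norm_nonneg g]
  have hp : ‖p‖ ≤ 2 * ‖g‖ := by
    have := norm_sub_norm_le (g - p) g
    have h2 := norm_sub_le g (g - p)
    calc ‖p‖ = ‖g - (g - p)‖ := by congr 1; abel
    _ ≤ ‖g‖ + ‖g - p‖ := norm_sub_le _ _
    _ ≤ 2 * ‖g‖ := by linarith
  -- conclude
  have hCS : -⟪F' x - g, p⟫ ≤ ‖F' x - g‖ * ‖p‖ := by
    have := abs_real_inner_le_norm (F' x - g) p
    have := neg_abs_le ⟪F' x - g, p⟫
    linarith [abs_real_inner_le_norm (F' x - g) p]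
  have hmul : ‖F' x - g‖ * ‖p‖ ≤ (lam * L * ‖g‖) * (2 * ‖g‖) :=
    mul_le_mul hlipb hp (norm_nonneg p) (by positivity)
  calc -lam * ⟪F' x - g, p⟫ = lam * (-⟪F' x - g, p⟫) := by ring
    _ ≤ lam * (‖F' x - g‖ * ‖p‖) := by
        exact mul_le_mul_of_nonneg_left hCS (le_of_lt hlam)
    _ ≤ lam * ((lam * L * ‖g‖) * (2 * ‖g‖)) :=
        mul_le_mul_of_nonneg_left hmul (le_of_lt hlam)
    _ = 2 * lam ^ 2 * L * ‖g‖ ^ 2 := by ring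
end

section
/- Let n ≥ 1, Y ∈ ℝ^n, λ > 0, and let D(z) = (1/n) Σ_{i=1}^n (Y_i − z_i)²/2 be the least squares empirical risk. Then for every z ∈ ℝ^n, the proximal direction equals the gradient direction up to a constant factor: (1/λ)(z − prox_{λ n D}(z)) = (1/(1+λ)) (z − Y) = (n/(1+λ)) ∇D(z). Hence for the least squares loss, proximal boosting's direction of descent coincides with gradient boosting's direction of descent up to the positive scalar factor n/(1+λ). -/
/-!
Up to the factor `λ n · (1/n) = λ`, the prox objective is `(λ/2)‖u - Y‖² + (1/2)‖u - z‖²`.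
Completing the square turns it into `((1+λ)/2)‖u - (z + λY)/(1+λ)‖²` plus a constant, so the
prox is the weighted mean `(z + λY)/(1+λ)`, and `z - prox = λ (z - Y)/(1+λ)`.
-/

section WeightedSquaredDistance

variable {E : Type*} [NormedAddCommGroup E] [InnerProductSpace ℝ E]

theorem mul_norm_sub_sq_add_mul_norm_sub_sq {a b : ℝ} (hab : a + b ≠ 0) (x y u : E) :
    a * ‖u - x‖ ^ 2 + b * ‖u - y‖ ^ 2 =
      (a + b) * ‖u - (a + b)⁻¹ • (a • x + b • y)‖ ^ 2 + a * b / (a + b) * ‖x - y‖ ^ 2 := by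
  have hmean : u - (a + b)⁻¹ • (a • x + b • y) = (a + b)⁻¹ • (a • (u - x) + b • (u - y)) := by
    match_scalars <;> field_simp
  have hdiff : x - y = (u - y) - (u - x) := by abel
  rw [hmean, hdiff]
  generalize u - x = p, u - y = q
  rw [norm_smul, mul_pow, norm_add_sq_real, norm_sub_sq_real, norm_smul, norm_smul,
    real_inner_smul_left, real_inner_smul_right, real_inner_comm p]
  simp only [Real.norm_eq_abs, sq_abs, mul_pow, inv_pow]
  field_simp
  ring

theorem eq_weightedMean_of_isMinOn {a b : ℝ} (hab : 0 < a + b) {x y p : E}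
    (hp : IsMinOn (fun u => a * ‖u - x‖ ^ 2 + b * ‖u - y‖ ^ 2) Set.univ p) :
    p = (a + b)⁻¹ • (a • x + b • y) := by
  have hle := isMinOn_iff.mp hp ((a + b)⁻¹ • (a • x + b • y)) (Set.mem_univ _)
  simp only [mul_norm_sub_sq_add_mul_norm_sub_sq hab.ne', sub_self, norm_zero] at hle
  have hsq : ‖p - (a + b)⁻¹ • (a • x + b • y)‖ ^ 2 ≤ 0 := by nlinarith
  simpa [sub_eq_zero] using hsq

end WeightedSquaredDistance

theorem EuclideanSpace.sum_sq_sub_eq_norm_sub_sq {ι : Type*} [Fintype ι]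
    (x y : EuclideanSpace ℝ ι) : ∑ i, (x i - y i) ^ 2 = ‖x - y‖ ^ 2 := by
  simp [EuclideanSpace.norm_sq_eq]

/-- For the least squares empirical risk, the proximal direction of descent
coincides with the gradient direction up to the positive factor `n/(1+λ)`. -/
theorem prox_direction_eq_gradient_direction_least_squares {n : ℕ} (hn : 1 ≤ n)
    (Y : EuclideanSpace ℝ (Fin n)) (lam : ℝ) (hlam : 0 < lam)
    (D : EuclideanSpace ℝ (Fin n) → ℝ)
    (hD : ∀ u, D u = (1 / (n : ℝ)) * ∑ i, (Y i - u i) ^ 2 / 2)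
    (gradD : EuclideanSpace ℝ (Fin n) → EuclideanSpace ℝ (Fin n))
    (hgradD : ∀ u i, gradD u i = (u i - Y i) / (n : ℝ))
    (z : EuclideanSpace ℝ (Fin n))
    (pz : EuclideanSpace ℝ (Fin n))
    (hpz : IsMinOn (fun u => lam * (n : ℝ) * D u + 1 / 2 * ‖u - z‖ ^ 2) Set.univ pz) :
    (1 / lam) • (z - pz) = (1 / (1 + lam)) • (z - Y) ∧
      (1 / lam) • (z - pz) = ((n : ℝ) / (1 + lam)) • gradD z := by
  have hn0 : (n : ℝ) ≠ 0 := Nat.cast_ne_zero.mpr (by omega)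
  have hobj : (fun u => lam * (n : ℝ) * D u + 1 / 2 * ‖u - z‖ ^ 2) =
      fun u => lam / 2 * ‖u - Y‖ ^ 2 + 1 / 2 * ‖u - z‖ ^ 2 := by
    funext u
    rw [hD, ← Finset.sum_div, EuclideanSpace.sum_sq_sub_eq_norm_sub_sq, norm_sub_rev]
    field_simp
  rw [hobj] at hpz
  have hprox := eq_weightedMean_of_isMinOn (by linarith) hpz
  have hgrad : gradD z = (n : ℝ)⁻¹ • (z - Y) := by
    ext i
    rw [hgradD, PiLp.smul_apply, PiLp.sub_apply, smul_eq_mul, div_eq_inv_mul]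
  have hdir : (1 / lam) • (z - pz) = (1 / (1 + lam)) • (z - Y) := by
    rw [hprox]
    match_scalars <;> field_simp <;> ring
  refine ⟨hdir, ?_⟩
  rw [hdir, hgrad, smul_smul]
  field_simp
end
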